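/- Let m = 3, r ∈ ℕ, and λ ∈ ℂ. If f is a vertex function on C_3^N supported in Σ_r satisfying A_0 f = λ • f, then A_+ f is supported in Σ_{r+1} and A_0 (A_+ f) = (λ + 1) • (A_+ f); that is, the outer adjacency maps λ-eigenvectors of A_0 supported in Σ_r to (λ+1)-eigenvectors of A_0 supported in Σ_{r+1}. -/

import Mathlib

open Finset

/-- The standard generator `e_k` of `(ZMod m)^N`: equal to `1` in coordinate `k`,
`0` elsewhere. -/
def eV (N m : ℕ) (k : Fin N) : Fin N → ZMod m :=
  fun j => if j = k then 1 else 0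

/-- Adjacency in the Cayley graph `C_m^N`: `v ∼ w` iff `w = v + e_k` or `w = v - e_k`
for some coordinate `k`. -/
def adj (N m : ℕ) (v w : Fin N → ZMod m) : Prop :=
  ∃ k : Fin N, w = v + eV N m k ∨ w = v - eV N m k

/-- The `k`-th level of a vertex: `d_k(v) = min((v k).val, m - (v k).val)`. -/
def lev (N m : ℕ) (v : Fin N → ZMod m) (k : Fin N) : ℕ :=
  min ((v k).val) (m - (v k).val)

/-- Path distance of a vertex to the origin: `d(v) = Σ_k d_k(v)`. -/
def distO (N m : ℕ) (v : Fin N → ZMod m) : ℕ :=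
  ∑ k : Fin N, lev N m v k

open Classical in
/-- Adjacency operator: `(A f)(v) = Σ_{w ∼ v} f(w)`. -/
noncomputable def Aop (N m : ℕ) [NeZero m] (f : (Fin N → ZMod m) → ℂ) :
    (Fin N → ZMod m) → ℂ :=
  fun v => ∑ w : Fin N → ZMod m, if adj N m v w then f w else 0

open Classical in
/-- Outer adjacency: `(A₊ f)(v) = Σ_{w ∼ v, d(w) < d(v)} f(w)`. -/
noncomputable def Aplus (N m : ℕ) [NeZero m] (f : (Fin N → ZMod m) → ℂ) :
    (Fin N → ZMod m) → ℂ :=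
  fun v => ∑ w : Fin N → ZMod m,
    if adj N m v w ∧ distO N m w < distO N m v then f w else 0

open Classical in
/-- Inner adjacency: `(A₋ f)(v) = Σ_{w ∼ v, d(w) > d(v)} f(w)`. -/
noncomputable def Aminus (N m : ℕ) [NeZero m] (f : (Fin N → ZMod m) → ℂ) :
    (Fin N → ZMod m) → ℂ :=
  fun v => ∑ w : Fin N → ZMod m,
    if adj N m v w ∧ distO N m v < distO N m w then f w else 0

open Classical in
/-- Neutral adjacency: `(A₀ f)(v) = Σ_{w ∼ v, d(w) = d(v)} f(w)`. -/
noncomputable def Azero (N m : ℕ) [NeZero m] (f : (Fin N → ZMod m) → ℂ) :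
    (Fin N → ZMod m) → ℂ :=
  fun v => ∑ w : Fin N → ZMod m,
    if adj N m v w ∧ distO N m w = distO N m v then f w else 0

/-- The `k`-reflection `ṽ_k` of a vertex: negate the `k`-th coordinate. -/
def reflV (N m : ℕ) (k : Fin N) (v : Fin N → ZMod m) : Fin N → ZMod m :=
  Function.update v k (-(v k))

/-- Level-one reflection sum: `(R₁ f)(v) = Σ_{k : d_k(v) = 1} f(ṽ_k)`. -/
noncomputable def R1 (N m : ℕ) (f : (Fin N → ZMod m) → ℂ) :
    (Fin N → ZMod m) → ℂ :=
  fun v => ∑ k ∈ Finset.univ.filter (fun k => lev N m v k = 1), f (reflV N m k v)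

/-- Number of coordinates of `v` at level `ℓ`. -/
def cardLev (N m : ℕ) (v : Fin N → ZMod m) (ℓ : ℕ) : ℕ :=
  (Finset.univ.filter (fun k => lev N m v k = ℓ)).card

/-!
On `C_3^N` every coordinate has level `0` or `1`, so `d(v)` counts the nonzero coordinates of
`v`. A nonzero coordinate `a` has the neighbours `0` (one level down) and `-a` (same level);
hence `A₀ = R₁` and `(A₊ f)(v) = Σ_{v_k ≠ 0} f(v with v_k := 0)`. Expanding `A₀ (A₊ f)` over
pairs of nonzero coordinates, the diagonal pairs give `A₊ f` and the off-diagonal pairs give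
`A₊ (A₀ f)`, so `A₀ A₊ = A₊ A₀ + A₊` and `A₊` shifts `A₀`-eigenvalues by one. The support claim
holds on every `C_m^N`, because `d` changes by at most one along an edge.
-/

section

variable {N m : ℕ}

lemma lev_eq_natAbs_valMinAbs [NeZero m] (v : Fin N → ZMod m) (k : Fin N) :
    lev N m v k = (v k).valMinAbs.natAbs :=
  (ZMod.valMinAbs_natAbs_eq_min (v k)).symm

lemma distO_add_le [NeZero m] (v w : Fin N → ZMod m) :
    distO N m (v + w) ≤ distO N m v + distO N m w := by
  simp only [distO, ← Finset.sum_add_distrib, lev_eq_natAbs_valMinAbs]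
  refine Finset.sum_le_sum fun k _ => ?_
  exact (ZMod.natAbs_valMinAbs_add_le _ _).trans (Int.natAbs_add_le _ _)

lemma distO_neg [NeZero m] (v : Fin N → ZMod m) : distO N m (-v) = distO N m v := by
  simp only [distO, lev_eq_natAbs_valMinAbs, Pi.neg_apply, ZMod.natAbs_valMinAbs_neg]

lemma distO_eV_le (k : Fin N) : distO N m (eV N m k) ≤ 1 := by
  calc distO N m (eV N m k) = lev N m (eV N m k) k :=
        Finset.sum_eq_single k (fun j _ hj => by simp [lev, eV, hj]) (by simp)
    _ ≤ (1 : ZMod m).val := by simp only [lev, eV]; exact min_le_left _ _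
    _ ≤ 1 := by rw [ZMod.val_one_eq_one_mod]; exact Nat.mod_le 1 m

lemma distO_le_distO_add_one_of_adj [NeZero m] {v w : Fin N → ZMod m} (h : adj N m v w) :
    distO N m v ≤ distO N m w + 1 := by
  obtain ⟨k, rfl | rfl⟩ := h
  · calc distO N m v = distO N m (v + eV N m k + -eV N m k) := by rw [add_neg_cancel_right]
      _ ≤ distO N m (v + eV N m k) + distO N m (-eV N m k) := distO_add_le _ _
      _ ≤ _ := by rw [distO_neg]; gcongr; exact distO_eV_le k
  · calc distO N m v = distO N m (v - eV N m k + eV N m k) := by rw [sub_add_cancel]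
      _ ≤ distO N m (v - eV N m k) + distO N m (eV N m k) := distO_add_le _ _
      _ ≤ _ := by gcongr; exact distO_eV_le k

theorem Aplus_eq_zero_of_distO_ne [NeZero m] {r : ℕ} {f : (Fin N → ZMod m) → ℂ}
    (hf : ∀ v, distO N m v ≠ r → f v = 0) {v : Fin N → ZMod m} (hv : distO N m v ≠ r + 1) :
    Aplus N m f v = 0 := by
  refine Finset.sum_eq_zero fun w _ => ?_
  split_ifs with hw
  · refine hf w fun hwr => hv ?_
    have := distO_le_distO_add_one_of_adj hw.1
    omega
  · rfl

lemma eV_injective (hm : 1 < m) : Function.Injective (eV N m) := by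
  have : Fact (1 < m) := ⟨hm⟩
  intro k j h
  by_contra hkj
  simpa [eV, hkj] using congrFun h k

lemma add_eV_ne_sub_eV (hm : 2 < m) (v : Fin N → ZMod m) (k j : Fin N) :
    v + eV N m k ≠ v - eV N m j := by
  have : Fact (1 < m) := ⟨by omega⟩
  intro h
  have hkj : eV N m k k + eV N m j k = 0 := by
    have := eq_sub_iff_add_eq.mp h
    rw [add_assoc, add_eq_left] at this
    exact congrFun this k
  by_cases hjk : k = j
  · subst hjk
    have h2 : ((2 : ℕ) : ZMod m) = 0 := by simpa [eV, one_add_one_eq_two] using hkj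
    have := Nat.le_of_dvd two_pos ((ZMod.natCast_eq_zero_iff 2 m).mp h2)
    omega
  · simp [eV, hjk] at hkj

open Classical in
lemma sum_adj_eq {M : Type*} [AddCommMonoid M] [NeZero m] (hm : 2 < m) (v : Fin N → ZMod m)
    (g : (Fin N → ZMod m) → M) :
    (∑ w, if adj N m v w then g w else 0) = ∑ k, (g (v + eV N m k) + g (v - eV N m k)) := by
  let φ : Fin N ⊕ Fin N → (Fin N → ZMod m) :=
    Sum.elim (fun k => v + eV N m k) (fun k => v - eV N m k)
  have hφ : Function.Injective φ :=
    ((add_right_injective v).comp (eV_injective (by omega))).sumElim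
      ((sub_right_injective).comp (eV_injective (by omega))) (add_eV_ne_sub_eV hm v)
  have himg : Finset.univ.filter (adj N m v) = Finset.univ.map ⟨φ, hφ⟩ := by
    ext w
    simp [adj, φ, eq_comm, exists_or]
  calc (∑ w, if adj N m v w then g w else 0) = ∑ w ∈ Finset.univ.filter (adj N m v), g w :=
        (Finset.sum_filter _ _).symm
    _ = ∑ x, g (φ x) := by rw [himg, Finset.sum_map]; rfl
    _ = _ := by rw [Fintype.sum_sum_type, Finset.sum_add_distrib]; rfl

lemma add_eV (v : Fin N → ZMod m) (k : Fin N) :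
    v + eV N m k = Function.update v k (v k + 1) := by
  funext j
  by_cases h : j = k <;> simp [eV, h]

lemma sub_eV (v : Fin N → ZMod m) (k : Fin N) :
    v - eV N m k = Function.update v k (v k - 1) := by
  funext j
  by_cases h : j = k <;> simp [eV, h]

lemma distO_update_add (v : Fin N → ZMod m) (k : Fin N) (c : ZMod m) :
    distO N m (Function.update v k c) + lev N m v k
      = distO N m v + lev N m (Function.update v k c) k := by
  have hrest : ∑ j ∈ Finset.univ.erase k, lev N m (Function.update v k c) j
      = ∑ j ∈ Finset.univ.erase k, lev N m v j :=
    Finset.sum_congr rfl fun j hj => by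
      simp [lev, Function.update_of_ne (Finset.ne_of_mem_erase hj)]
  rw [distO, distO, ← Finset.add_sum_erase _ _ (Finset.mem_univ k),
    ← Finset.add_sum_erase _ (lev N m v) (Finset.mem_univ k), hrest]
  ring

lemma lev_three (v : Fin N → ZMod 3) (k : Fin N) : lev N 3 v k = if v k = 0 then 0 else 1 := by
  have h : ∀ a : ZMod 3, min a.val (3 - a.val) = if a = 0 then 0 else 1 := by decide
  exact h (v k)

lemma distO_update_eq_iff_three (v : Fin N → ZMod 3) (k : Fin N) (c : ZMod 3) :
    distO N 3 (Function.update v k c) = distO N 3 v ↔ (c = 0 ↔ v k = 0) := by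
  have h := distO_update_add v k c
  rw [lev_three, lev_three, Function.update_self] at h
  by_cases hc : c = 0 <;> by_cases hv : v k = 0 <;> simp [hc, hv] at h ⊢ <;> omega

lemma distO_update_lt_iff_three (v : Fin N → ZMod 3) (k : Fin N) (c : ZMod 3) :
    distO N 3 (Function.update v k c) < distO N 3 v ↔ c = 0 ∧ v k ≠ 0 := by
  have h := distO_update_add v k c
  rw [lev_three, lev_three, Function.update_self] at h
  by_cases hc : c = 0 <;> by_cases hv : v k = 0 <;> simp [hc, hv] at h ⊢ <;> omega

lemma zmod_three_neighbours {a : ZMod 3} (ha : a ≠ 0) :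
    (a + 1 = -a ∧ a - 1 = 0) ∨ (a + 1 = 0 ∧ a - 1 = -a) := by
  revert a
  decide

theorem Azero_three_eq_R1 (f : (Fin N → ZMod 3) → ℂ) : Azero N 3 f = R1 N 3 f := by
  funext v
  have hcoord : ∀ k, ((if distO N 3 (v + eV N 3 k) = distO N 3 v then f (v + eV N 3 k) else 0)
      + if distO N 3 (v - eV N 3 k) = distO N 3 v then f (v - eV N 3 k) else 0)
      = if lev N 3 v k = 1 then f (reflV N 3 k v) else 0 := by
    intro k
    simp only [add_eV, sub_eV, distO_update_eq_iff_three, lev_three, reflV]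
    by_cases ha : v k = 0
    · simp [ha]
    · rcases zmod_three_neighbours ha with ⟨h1, h2⟩ | ⟨h1, h2⟩ <;> simp [h1, h2, ha]
  simp only [Azero, ite_and, sum_adj_eq (m := 3) (by norm_num), hcoord, R1, Finset.sum_filter]

theorem Aplus_three_apply (f : (Fin N → ZMod 3) → ℂ) (v : Fin N → ZMod 3) :
    Aplus N 3 f v
      = ∑ k ∈ Finset.univ.filter (fun k => lev N 3 v k = 1), f (Function.update v k 0) := by
  have hcoord : ∀ k, ((if distO N 3 (v + eV N 3 k) < distO N 3 v then f (v + eV N 3 k) else 0)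
      + if distO N 3 (v - eV N 3 k) < distO N 3 v then f (v - eV N 3 k) else 0)
      = if lev N 3 v k = 1 then f (Function.update v k 0) else 0 := by
    intro k
    simp only [add_eV, sub_eV, distO_update_lt_iff_three, lev_three]
    by_cases ha : v k = 0
    · simp [ha]
    · rcases zmod_three_neighbours ha with ⟨h1, h2⟩ | ⟨h1, h2⟩ <;> simp [h1, h2, ha]
  simp only [Aplus, ite_and, sum_adj_eq (m := 3) (by norm_num), hcoord, Finset.sum_filter]

lemma lev_reflV [NeZero m] (v : Fin N → ZMod m) (k j : Fin N) :
    lev N m (reflV N m k v) j = lev N m v j := by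
  by_cases hj : j = k
  · subst hj
    simp only [lev_eq_natAbs_valMinAbs, reflV, Function.update_self, ZMod.natAbs_valMinAbs_neg]
  · simp [lev, reflV, hj]

lemma filter_lev_reflV [NeZero m] (v : Fin N → ZMod m) (k : Fin N) (ℓ : ℕ) :
    Finset.univ.filter (fun j => lev N m (reflV N m k v) j = ℓ)
      = Finset.univ.filter (fun j => lev N m v j = ℓ) := by
  simp only [lev_reflV]

lemma filter_lev_update_zero (v : Fin N → ZMod m) (k : Fin N) :
    Finset.univ.filter (fun j => lev N m (Function.update v k 0) j = 1)
      = (Finset.univ.filter (fun j => lev N m v j = 1)).erase k := by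
  ext j
  simp only [Finset.mem_filter, Finset.mem_erase, Finset.mem_univ, true_and]
  by_cases hj : j = k
  · subst hj
    simp [lev]
  · simp [lev, hj]

lemma update_reflV_self (v : Fin N → ZMod m) (k : Fin N) (c : ZMod m) :
    Function.update (reflV N m k v) k c = Function.update v k c := by
  simp [reflV]

lemma update_reflV_of_ne (v : Fin N → ZMod m) {j k : Fin N} (c : ZMod m) (hjk : j ≠ k) :
    Function.update (reflV N m k v) j c = reflV N m k (Function.update v j c) := by
  rw [reflV, reflV, Function.update_of_ne hjk.symm, Function.update_comm hjk]

theorem Azero_Aplus_three (f : (Fin N → ZMod 3) → ℂ) :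
    Azero N 3 (Aplus N 3 f) = Aplus N 3 (Azero N 3 f) + Aplus N 3 f := by
  funext v
  set S := Finset.univ.filter (fun k => lev N 3 v k = 1)
  have hdiag : ∀ k ∈ S, Aplus N 3 f (reflV N 3 k v)
      = f (Function.update v k 0) + ∑ j ∈ S.erase k, f (reflV N 3 k (Function.update v j 0)) := by
    intro k hk
    rw [Aplus_three_apply, filter_lev_reflV, ← Finset.add_sum_erase _ _ hk, update_reflV_self]
    exact congrArg _ (Finset.sum_congr rfl fun j hj => by
      rw [update_reflV_of_ne _ _ (Finset.ne_of_mem_erase hj)])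
  have hswap : ∑ k ∈ S, ∑ j ∈ S.erase k, f (reflV N 3 k (Function.update v j 0))
      = ∑ j ∈ S, R1 N 3 f (Function.update v j 0) := by
    simp only [R1, filter_lev_update_zero]
    exact Finset.sum_comm' fun k j => by
      simp only [Finset.mem_erase]
      tauto
  rw [Pi.add_apply, Azero_three_eq_R1, Azero_three_eq_R1, R1, Aplus_three_apply,
    Aplus_three_apply, Finset.sum_congr rfl hdiag, Finset.sum_add_distrib, hswap, add_comm]

lemma Aplus_smul [NeZero m] (c : ℂ) (f : (Fin N → ZMod m) → ℂ) :
    Aplus N m (c • f) = c • Aplus N m f := by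
  funext v
  simp [Aplus, Finset.mul_sum, mul_ite]

end

theorem outer_raises_neutral_eigenvalue_C3_general (N r : ℕ) (lam : ℂ)
    (f : (Fin N → ZMod 3) → ℂ)
    (hf : ∀ v, distO N 3 v ≠ r → f v = 0)
    (heig : ∀ v, Azero N 3 f v = lam * f v) :
    (∀ v, distO N 3 v ≠ r + 1 → Aplus N 3 f v = 0) ∧
    (∀ v, Azero N 3 (Aplus N 3 f) v = (lam + 1) * Aplus N 3 f v) := by
  refine ⟨fun v hv => Aplus_eq_zero_of_distO_ne hf hv, fun v => ?_⟩
  have hA0 : Azero N 3 f = lam • f := funext heig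
  rw [Azero_Aplus_three, Pi.add_apply, hA0, Aplus_smul, Pi.smul_apply, smul_eq_mul]
  ring

/-- on `C_3^N`, `A₊` maps `λ`-eigenvectors of `A₀` supported in `Σ_r`
to `(λ+1)`-eigenvectors of `A₀` supported in `Σ_{r+1}`. -/
theorem outer_raises_neutral_eigenvalue_C3 (N r : ℕ) (hN : 1 ≤ N) (lam : ℂ)
    (f : (Fin N → ZMod 3) → ℂ)
    (hf : ∀ v, distO N 3 v ≠ r → f v = 0)
    (heig : ∀ v, Azero N 3 f v = lam * f v) :
    (∀ v, distO N 3 v ≠ r + 1 → Aplus N 3 f v = 0) ∧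
    (∀ v, Azero N 3 (Aplus N 3 f) v = (lam + 1) * Aplus N 3 f v) :=
  outer_raises_neutral_eigenvalue_C3_general N r lam f hf heig
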